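/- arXiv:2012.11010 — 7 statements merged into one kernel-verified Lean document; each statement's English description precedes it below -/
import Mathlib

section
/- Let α ∈ ℝ and let w : ℝ → ℝ be smooth with w''(z) = 2·w(z)³ + z·w(z) + α for all z ∈ ℝ. Set u := w' − w² and suppose z − 2·u(z) ≠ 0 for all z ∈ ℝ. Define σ : ℝ → ℝ by σ(z) := L_2[u](z) − z·u(z) − z²/4. Then for all z ∈ ℝ: −u'(z) + (u'(z))² + (z − 2·u(z))·( ( u''(z) − L_2[u](z) ) + 2·u(z)² + σ(z) + z²/4 ) = α·(α − 1). -/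
/-- The Lenard sequence of a function `u : ℝ → ℝ`:
`L₀[u] = 1/2`, `L₁[u] = u`, and for `k ≥ 1`,
`L_{k+1}[u] = (L_k[u])'' + 3·L_k[u]·L₁[u]
  + ∑_{j=1}^{k-1} ( L_{k-j}[u]·(4·L₁[u]·L_j[u] - L_{j+1}[u] + 2·(L_j[u])'') - (L_j[u])'·(L_{k-j}[u])' )`. -/
noncomputable def lenard (u : ℝ → ℝ) : ℕ → ℝ → ℝ
  | 0 => fun _ => 1 / 2
  | 1 => u
  | k + 2 => fun z =>
      deriv (deriv (lenard u (k + 1))) z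
        + 3 * lenard u (k + 1) z * lenard u 1 z
        + ∑ j ∈ (Finset.range k).attach,
            (lenard u (k - j.1) z *
                (4 * lenard u 1 z * lenard u (j.1 + 1) z - lenard u (j.1 + 2) z
                  + 2 * deriv (deriv (lenard u (j.1 + 1))) z)
              - deriv (lenard u (j.1 + 1)) z * deriv (lenard u (k - j.1)) z)
  termination_by k => k
  decreasing_by
    all_goals first
      | omega
      | (have h := j.2; simp only [Finset.mem_range] at h; omega)

/-- **Sigma form of P_II** (`n = 1` case, equation (SF1n1) of the paper).
If `w''(z) = 2 w(z)³ + z w(z) + α`, `u = w' - w²`, `z - 2 u(z) ≠ 0` everywhere, and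
`σ(z) = L₂[u](z) - z u(z) - z²/4`, then
`-u' + (u')² + (z - 2u)·((u'' - L₂[u]) + 2u² + σ + z²/4) = α(α - 1)`. -/
theorem sigma_form_PII_n_one
    (α : ℝ) (w : ℝ → ℝ) (hw : ContDiff ℝ (⊤ : ℕ∞) w)
    (hP : ∀ z : ℝ, deriv (deriv w) z = 2 * (w z) ^ 3 + z * w z + α)
    (u σ : ℝ → ℝ)
    (hu : ∀ z : ℝ, u z = deriv w z - (w z) ^ 2)
    (hne : ∀ z : ℝ, z - 2 * u z ≠ 0)
    (hσ : ∀ z : ℝ, σ z = lenard u 2 z - z * u z - z ^ 2 / 4) :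
    ∀ z : ℝ,
      -(deriv u z) + (deriv u z) ^ 2
        + (z - 2 * u z) *
            ((deriv (deriv u) z - lenard u 2 z) + 2 * (u z) ^ 2 + σ z + z ^ 2 / 4)
        = α * (α - 1) := by
  intro z
  have hw1 : Differentiable ℝ w := hw.differentiable (by simp)
  have hw' : ContDiff ℝ (⊤ : ℕ∞) w := hw.of_le (by simp)
  have hw2 : Differentiable ℝ (deriv w) :=
    ((contDiff_infty_iff_deriv.mp hw').2).differentiable (by simp)
  have huf : u = fun x => deriv w x - w x ^ 2 := funext hu
  have hdu : ∀ x : ℝ, HasDerivAt u (x * w x + α - 2 * w x * u x) x := by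
    intro x
    have h1 : HasDerivAt (fun z => deriv w z - w z ^ 2)
        (deriv (deriv w) x - 2 * w x * deriv w x) x := by
      have h := ((hw2 x).hasDerivAt).fun_sub (((hw1 x).hasDerivAt).fun_pow 2)
      exact h.congr_deriv (by ring)
    have hval : deriv (deriv w) x - 2 * w x * deriv w x
        = x * w x + α - 2 * w x * u x := by
      rw [hP, hu]; ring
    have h2 : HasDerivAt u (deriv (deriv w) x - 2 * w x * deriv w x) x := by
      rw [huf]; exact h1
    rw [hval] at h2
    exact h2
  have hderiv_u : ∀ x : ℝ, deriv u x = x * w x + α - 2 * w x * u x :=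
    fun x => (hdu x).deriv
  have hdd : deriv (deriv u) z
      = 1 * w z + z * deriv w z - (2 * deriv w z * u z + 2 * w z * (z * w z + α - 2 * w z * u z)) := by
    have h2 : HasDerivAt (fun x => x * w x + α - 2 * w x * u x)
        (1 * w z + z * deriv w z
          - (2 * deriv w z * u z + 2 * w z * (z * w z + α - 2 * w z * u z))) z := by
      exact ((((hasDerivAt_id z).mul (hw1 z).hasDerivAt).add_const α).sub
        ((((hw1 z).hasDerivAt).const_mul 2).mul (hdu z)))
    have : deriv u = fun x => x * w x + α - 2 * w x * u x := funext hderiv_u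
    rw [this]
    exact h2.deriv
  have hL : lenard u 2 z = deriv (deriv u) z + 3 * u z * u z := by
    have e1 : lenard u 1 = u := by rw [lenard]
    show lenard u (0 + 2) z = _
    rw [lenard, e1]
    simp
  have hw' : deriv w z = u z + w z ^ 2 := by have := hu z; linarith
  rw [hσ z, hL, hdd, hderiv_u z, hw']
  ring
end

section
/- Let n ≥ 1 be an integer, t_1, …, t_{n−1} real constants, t_n := 1, and α ∈ ℝ. Let w : ℝ → ℝ be smooth, set u := w' − w² and f_n := Σ_{l=1}^n t_l·L_l[u], and suppose w solves P_II^(n), i.e. f_n'(z) + 2·w(z)·f_n(z) = z·w(z) + α for all z ∈ ℝ. Then for all z ∈ ℝ: −f_n'(z) + (f_n'(z))² + (z − 2·f_n(z))·f_n''(z) − u(z)·(z − 2·f_n(z))² = α·(α − 1). -/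
lemma deriv_contDiff' {g : ℝ → ℝ} (h : ContDiff ℝ (⊤ : ℕ∞) g) : ContDiff ℝ (⊤ : ℕ∞) (deriv g) := by
  have h' : ContDiff ℝ (((⊤ : ℕ∞) : WithTop ℕ∞) + 1) g := by
    rwa [show (((⊤ : ℕ∞) : WithTop ℕ∞) + 1) = ((⊤ : ℕ∞) : WithTop ℕ∞) by rfl]
  exact (contDiff_succ_iff_deriv.mp h').2.2

lemma lenard_contDiff {u : ℝ → ℝ} (hu : ContDiff ℝ (⊤ : ℕ∞) u) :
    ∀ k, ContDiff ℝ (⊤ : ℕ∞) (lenard u k) := by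
  intro k
  induction k using Nat.strong_induction_on with
  | _ k ih =>
    match k with
    | 0 => rw [lenard]; exact contDiff_const
    | 1 => rw [lenard]; exact hu
    | (k + 2) =>
      rw [lenard]
      have h1 : ContDiff ℝ (⊤ : ℕ∞) (lenard u (k + 1)) := ih (k + 1) (by omega)
      have h4 : ContDiff ℝ (⊤ : ℕ∞) (lenard u 1) := ih 1 (by omega)
      refine (((deriv_contDiff' (deriv_contDiff' h1)).add
        ((contDiff_const.mul h1).mul h4)).add ?_)
      refine ContDiff.sum fun j _ => ?_
      have hj := j.2
      simp only [Finset.mem_range] at hj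
      have a1 : ContDiff ℝ (⊤ : ℕ∞) (lenard u (k - j.1)) := ih _ (by omega)
      have a2 : ContDiff ℝ (⊤ : ℕ∞) (lenard u (j.1 + 1)) := ih _ (by omega)
      have a3 : ContDiff ℝ (⊤ : ℕ∞) (lenard u (j.1 + 2)) := ih _ (by omega)
      exact (a1.mul ((((contDiff_const.mul h4).mul a2).sub a3).add
        (contDiff_const.mul (deriv_contDiff' (deriv_contDiff' a2))))).sub
        ((deriv_contDiff' a2).mul (deriv_contDiff' a1))

/-- **Intermediate identity (3.3)** for the second Painlevé hierarchy: if `w` smoothly solves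
`P_II^(n)`, i.e. `f_n' + 2 w f_n = z w + α` with `u = w' - w²`, `f_n = ∑_{l=1}^n t_l L_l[u]`
and `t_n = 1`, then `-f_n' + (f_n')² + (z - 2 f_n) f_n'' - u (z - 2 f_n)² = α(α - 1)`. -/
theorem intermediate_identity_PII_hierarchy
    (n : ℕ) (hn : 1 ≤ n) (t : ℕ → ℝ) (htn : t n = 1) (α : ℝ)
    (w : ℝ → ℝ) (hw : ContDiff ℝ (⊤ : ℕ∞) w)
    (u f : ℝ → ℝ)
    (hu : ∀ z : ℝ, u z = deriv w z - (w z) ^ 2)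
    (hf : ∀ z : ℝ, f z = ∑ l ∈ Finset.Icc 1 n, t l * lenard u l z)
    (hP : ∀ z : ℝ, deriv f z + 2 * w z * f z = z * w z + α) :
    ∀ z : ℝ,
      -(deriv f z) + (deriv f z) ^ 2 + (z - 2 * f z) * deriv (deriv f) z
        - u z * (z - 2 * f z) ^ 2
        = α * (α - 1) := by
  have huC : ContDiff ℝ (⊤ : ℕ∞) u := by
    have : u = fun z => deriv w z - w z ^ 2 := funext hu
    rw [this]
    exact (deriv_contDiff' hw).sub (hw.pow 2)
  have hfC : ContDiff ℝ (⊤ : ℕ∞) f := by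
    have : f = fun z => ∑ l ∈ Finset.Icc 1 n, t l * lenard u l z := funext hf
    rw [this]
    exact ContDiff.sum fun l _ => contDiff_const.mul (lenard_contDiff huC l)
  have hd1 : ∀ z, deriv f z = z * w z + α - 2 * (w z * f z) := fun z => by
    have := hP z; linarith
  have hdf : deriv f = fun z => z * w z + α - 2 * (w z * f z) := funext hd1
  intro z
  have hwz : HasDerivAt w (deriv w z) z :=
    ((hw.differentiable (by simp)) z).hasDerivAt
  have hfz : HasDerivAt f (deriv f z) z :=
    ((hfC.differentiable (by simp)) z).hasDerivAt
  have H : HasDerivAt (fun x => x * w x + α - 2 * (w x * f x))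
      (1 * w z + z * deriv w z - 2 * (deriv w z * f z + w z * deriv f z)) z :=
    (((hasDerivAt_id z).mul hwz).add_const α).sub ((hwz.mul hfz).const_mul 2)
  have hd2 : deriv (deriv f) z
      = 1 * w z + z * deriv w z - 2 * (deriv w z * f z + w z * deriv f z) := by
    conv_lhs => rw [hdf]
    exact H.deriv
  rw [hd2, hu z, hd1 z]
  ring
end

section
/- Let n ≥ 1 be an integer, t_1, …, t_{n−1} real constants, t_n := 1, and α ∈ ℝ. Let w : ℝ → ℝ be smooth, set u := w' − w² and f_n := Σ_{l=1}^n t_l·L_l[u], and suppose w solves P_II^(n), i.e. f_n'(z) + 2·w(z)·f_n(z) = z·w(z) + α for all z ∈ ℝ, and that z − 2·f_n(z) ≠ 0 for all z ∈ ℝ. Then the function F : ℝ → ℝ, F(z) := Σ_{l=1}^n t_l·L_{l+1}[u](z) − z·u(z), satisfies F'(z) = u(z) for every z ∈ ℝ; in particular, with the convention t_0 := 0 when n = 1, the function σ(z) := Σ_{l=1}^n t_l·L_{l+1}[u](z) − z·u(z) + (t_{n−1}/2)·z satisfies σ'(z) = u(z) + t_{n−1}/2 for all z. -/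
lemma lenard_one (u : ℝ → ℝ) : lenard u 1 = u := by rw [lenard]

lemma lenard_add_two (u : ℝ → ℝ) (k : ℕ) :
    lenard u (k+2) = fun z =>
      deriv (deriv (lenard u (k+1))) z + 3 * lenard u (k+1) z * u z
      + ∑ j ∈ Finset.range k,
          (lenard u (k-j) z * (4 * u z * lenard u (j+1) z - lenard u (j+2) z
            + 2 * deriv (deriv (lenard u (j+1))) z)
           - deriv (lenard u (j+1)) z * deriv (lenard u (k-j)) z) := by
  rw [lenard]
  funext z
  rw [lenard, ← Finset.sum_attach (Finset.range k)]

private lemma hasDerivAt_of_eq {f : ℝ → ℝ} {a b x : ℝ} (h : HasDerivAt f a x) (e : a = b) :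
    HasDerivAt f b x := e ▸ h

private lemma cd_deriv {f : ℝ → ℝ} (h : ContDiff ℝ (⊤:ℕ∞) f) :
    ContDiff ℝ (⊤:ℕ∞) (deriv f) := (contDiff_infty_iff_deriv.mp h).2

private lemma cd_hd {f : ℝ → ℝ} (h : ContDiff ℝ (⊤:ℕ∞) f) (x : ℝ) :
    HasDerivAt f (deriv f x) x :=
  ((h.differentiable (by simp)).differentiableAt).hasDerivAt

lemma lenard_smooth {u : ℝ → ℝ} (hu : ContDiff ℝ (⊤:ℕ∞) u) :
    ∀ k, ContDiff ℝ (⊤:ℕ∞) (lenard u k) := by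
  intro k
  induction k using Nat.strong_induction_on with
  | _ k ih =>
  match k, ih with
  | 0, _ => rw [lenard]; exact contDiff_const
  | 1, _ => rw [lenard]; exact hu
  | (k+2), ih =>
    rw [lenard_add_two]
    have h1 : ContDiff ℝ (⊤:ℕ∞) (lenard u (k+1)) := ih (k+1) (by omega)
    refine ContDiff.add (ContDiff.add ?_ ?_) ?_
    · exact cd_deriv (cd_deriv h1)
    · exact (contDiff_const.mul h1).mul hu
    · refine ContDiff.sum fun j hj => ?_
      simp only [Finset.mem_range] at hj
      have ha : ContDiff ℝ (⊤:ℕ∞) (lenard u (k-j)) := ih _ (by omega)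
      have hb : ContDiff ℝ (⊤:ℕ∞) (lenard u (j+1)) := ih _ (by omega)
      have hc : ContDiff ℝ (⊤:ℕ∞) (lenard u (j+2)) := ih _ (by omega)
      exact (ha.mul ((((contDiff_const.mul hu).mul hb).sub hc).add
        (contDiff_const.mul (cd_deriv (cd_deriv hb))))).sub
        ((cd_deriv hb).mul (cd_deriv ha))

private noncomputable def dfun (u : ℝ → ℝ) (K : ℕ) (z : ℝ) (j : ℕ) : ℝ :=
  4 * u z * (lenard u (j+1) z * deriv (lenard u (K-j)) z)
  + 2 * deriv u z * (lenard u (j+1) z * lenard u (K-j) z)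
  + deriv (lenard u (K-j)) z * deriv (deriv (lenard u (j+1))) z
  + lenard u (K-j) z * deriv (deriv (deriv (lenard u (j+1)))) z
  - deriv (lenard u (j+1)) z * deriv (deriv (lenard u (K-j))) z
  - lenard u (j+2) z * deriv (lenard u (K-j)) z

private lemma lenard_key {u : ℝ → ℝ} (K : ℕ)
    (ihm : ∀ m, 1 ≤ m → m ≤ K → ∀ z, deriv (lenard u (m+1)) z
      = deriv (deriv (deriv (lenard u m))) z + 4 * u z * deriv (lenard u m) z
        + 2 * deriv u z * lenard u m z) (z : ℝ) :
    ∑ j ∈ Finset.range K, dfun u K z j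
      = u z * deriv (lenard u (K+1)) z - deriv u z * lenard u (K+1) z := by
  have E0 : ∑ j ∈ Finset.range K, dfun u K z j
      = 4 * u z * (∑ j ∈ Finset.range K, lenard u (j+1) z * deriv (lenard u (K-j)) z)
      + 2 * deriv u z * (∑ j ∈ Finset.range K, lenard u (j+1) z * lenard u (K-j) z)
      + (∑ j ∈ Finset.range K, deriv (lenard u (K-j)) z * deriv (deriv (lenard u (j+1))) z)
      + (∑ j ∈ Finset.range K, lenard u (K-j) z * deriv (deriv (deriv (lenard u (j+1)))) z)
      - (∑ j ∈ Finset.range K, deriv (lenard u (j+1)) z * deriv (deriv (lenard u (K-j))) z)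
      - (∑ j ∈ Finset.range K, lenard u (j+2) z * deriv (lenard u (K-j)) z) := by
    simp only [dfun, Finset.sum_add_distrib, Finset.sum_sub_distrib, Finset.mul_sum]
  have hC : (∑ j ∈ Finset.range K, deriv (lenard u (K-j)) z * deriv (deriv (lenard u (j+1))) z)
      = ∑ j ∈ Finset.range K, deriv (lenard u (j+1)) z * deriv (deriv (lenard u (K-j))) z := by
    rw [← Finset.sum_range_reflect
      (fun j => deriv (lenard u (j+1)) z * deriv (deriv (lenard u (K-j))) z) K]
    refine Finset.sum_congr rfl fun j hj => ?_
    simp only [Finset.mem_range] at hj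
    have h1 : K - 1 - j + 1 = K - j := by omega
    have h2 : K - (K - 1 - j) = j + 1 := by omega
    rw [h1, h2]
  have hD : (∑ j ∈ Finset.range K, lenard u (K-j) z * deriv (deriv (deriv (lenard u (j+1)))) z)
      = ∑ j ∈ Finset.range K, lenard u (j+1) z * deriv (deriv (deriv (lenard u (K-j)))) z := by
    rw [← Finset.sum_range_reflect
      (fun j => lenard u (j+1) z * deriv (deriv (deriv (lenard u (K-j)))) z) K]
    refine Finset.sum_congr rfl fun j hj => ?_
    simp only [Finset.mem_range] at hj
    have h1 : K - 1 - j + 1 = K - j := by omega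
    have h2 : K - (K - 1 - j) = j + 1 := by omega
    rw [h1, h2]
  have hT1 : (∑ j ∈ Finset.range (K+1), lenard u (j+1) z * deriv (lenard u (K+1-j)) z)
      = (∑ j ∈ Finset.range K, lenard u (j+2) z * deriv (lenard u (K-j)) z)
        + u z * deriv (lenard u (K+1)) z := by
    rw [Finset.sum_range_succ' (fun j => lenard u (j+1) z * deriv (lenard u (K+1-j)) z) K]
    congr 1
    · refine Finset.sum_congr rfl fun j hj => ?_
      simp only [Finset.mem_range] at hj
      have h1 : K + 1 - (j + 1) = K - j := by omega
      rw [h1]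
    · simp [lenard_one]
  have hT2 : (∑ j ∈ Finset.range (K+1), lenard u (j+1) z * deriv (lenard u (K+1-j)) z)
      = (∑ j ∈ Finset.range K, lenard u (j+1) z * deriv (lenard u (K+1-j)) z)
        + lenard u (K+1) z * deriv u z := by
    rw [Finset.sum_range_succ]
    congr 1
    rw [show K + 1 - K = 1 by omega, lenard_one]
  have hMid : (∑ j ∈ Finset.range K, lenard u (j+1) z * deriv (lenard u (K+1-j)) z)
      = (∑ j ∈ Finset.range K, lenard u (j+1) z * deriv (deriv (deriv (lenard u (K-j)))) z)
        + 4 * u z * (∑ j ∈ Finset.range K, lenard u (j+1) z * deriv (lenard u (K-j)) z)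
        + 2 * deriv u z * (∑ j ∈ Finset.range K, lenard u (j+1) z * lenard u (K-j) z) := by
    have : (∑ j ∈ Finset.range K, lenard u (j+1) z * deriv (lenard u (K+1-j)) z)
        = ∑ j ∈ Finset.range K,
            (lenard u (j+1) z * deriv (deriv (deriv (lenard u (K-j)))) z
              + 4 * u z * (lenard u (j+1) z * deriv (lenard u (K-j)) z)
              + 2 * deriv u z * (lenard u (j+1) z * lenard u (K-j) z)) := by
      refine Finset.sum_congr rfl fun j hj => ?_
      simp only [Finset.mem_range] at hj
      have h1 : K + 1 - j = (K - j) + 1 := by omega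
      rw [h1, ihm (K-j) (by omega) (by omega) z]
      ring
    rw [this]
    simp only [Finset.sum_add_distrib, Finset.mul_sum]
  rw [E0, hC, hD]
  linarith [hT1, hT2, hMid]

lemma lenard_deriv {u : ℝ → ℝ} (hu : ContDiff ℝ (⊤:ℕ∞) u) :
    ∀ k, 1 ≤ k → ∀ z, deriv (lenard u (k+1)) z
      = deriv (deriv (deriv (lenard u k))) z + 4 * u z * deriv (lenard u k) z
        + 2 * deriv u z * lenard u k z := by
  intro k
  induction k using Nat.strong_induction_on with
  | _ k ih =>
  match k, ih with
  | 0, _ => intro h; omega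
  | (K+1), ih =>
    intro _ z
    have ihm : ∀ m, 1 ≤ m → m ≤ K → ∀ z, deriv (lenard u (m+1)) z
        = deriv (deriv (deriv (lenard u m))) z + 4 * u z * deriv (lenard u m) z
          + 2 * deriv u z * lenard u m z := fun m h1 h2 z => ih m (by omega) h1 z
    have sm : ∀ m, ContDiff ℝ (⊤:ℕ∞) (lenard u m) := lenard_smooth hu
    have hdL : ∀ m (x : ℝ), HasDerivAt (lenard u m) (deriv (lenard u m) x) x :=
      fun m x => cd_hd (sm m) x
    have hdL1 : ∀ m (x : ℝ), HasDerivAt (deriv (lenard u m)) (deriv (deriv (lenard u m)) x) x :=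
      fun m x => cd_hd (cd_deriv (sm m)) x
    have hdL2 : ∀ m (x : ℝ), HasDerivAt (deriv (deriv (lenard u m)))
        (deriv (deriv (deriv (lenard u m))) x) x :=
      fun m x => cd_hd (cd_deriv (cd_deriv (sm m))) x
    have hdu : ∀ x : ℝ, HasDerivAt u (deriv u x) x := cd_hd hu
    have hsummand : ∀ j ∈ Finset.range K, HasDerivAt (fun z =>
        lenard u (K-j) z * (4 * u z * lenard u (j+1) z - lenard u (j+2) z
          + 2 * deriv (deriv (lenard u (j+1))) z)
        - deriv (lenard u (j+1)) z * deriv (lenard u (K-j)) z) (dfun u K z j) z := by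
      intro j hj
      simp only [Finset.mem_range] at hj
      have hIH : deriv (lenard u (j+2)) z
          = deriv (deriv (deriv (lenard u (j+1)))) z + 4 * u z * deriv (lenard u (j+1)) z
            + 2 * deriv u z * lenard u (j+1) z := ihm (j+1) (by omega) (by omega) z
      have Hc := ((hdL (K-j) z).mul (((((hdu z).const_mul 4).mul (hdL (j+1) z)).sub
          (hdL (j+2) z)).add ((hdL2 (j+1) z).const_mul 2))).sub
          ((hdL1 (j+1) z).mul (hdL1 (K-j) z))
      exact hasDerivAt_of_eq Hc (by rw [hIH]; simp only [dfun, Pi.add_apply, Pi.sub_apply, Pi.mul_apply]; ring)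
    have H := ((hdL2 (K+1) z).fun_add (((hdL (K+1) z).const_mul 3).fun_mul (hdu z))).fun_add
        (HasDerivAt.fun_sum hsummand)
    show deriv (lenard u (K+2)) z = _
    rw [lenard_add_two u K, H.deriv, lenard_key K ihm z]
    ring

/-- **Normalization (3.7) / Lemma 3.1** of the paper: along a solution `w` of `P_II^(n)`
with `z - 2 f_n(z) ≠ 0` everywhere, the function
`F(z) = ∑_{l=1}^n t_l L_{l+1}[u](z) - z u(z)` satisfies `F' = u`;
in particular `σ(z) = F(z) + (t_{n-1}/2) z` satisfies `σ' = u + t_{n-1}/2`. -/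
theorem sigma_derivative_PII_hierarchy
    (n : ℕ) (hn : 1 ≤ n) (t : ℕ → ℝ) (htn : t n = 1) (α : ℝ)
    (w : ℝ → ℝ) (hw : ContDiff ℝ (⊤ : ℕ∞) w)
    (u f F σ : ℝ → ℝ)
    (hu : ∀ z : ℝ, u z = deriv w z - (w z) ^ 2)
    (hf : ∀ z : ℝ, f z = ∑ l ∈ Finset.Icc 1 n, t l * lenard u l z)
    (hP : ∀ z : ℝ, deriv f z + 2 * w z * f z = z * w z + α)
    (hne : ∀ z : ℝ, z - 2 * f z ≠ 0)
    (hF : ∀ z : ℝ, F z = (∑ l ∈ Finset.Icc 1 n, t l * lenard u (l + 1) z) - z * u z)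
    (hσ : ∀ z : ℝ, σ z = F z + (t (n - 1) / 2) * z) :
    (∀ z : ℝ, deriv F z = u z) ∧ (∀ z : ℝ, deriv σ z = u z + t (n - 1) / 2) := by
  have hw' : ContDiff ℝ (⊤:ℕ∞) w := hw.of_le (by simp)
  have hueq : u = fun z => deriv w z - w z ^ 2 := funext hu
  have hcu : ContDiff ℝ (⊤:ℕ∞) u := by
    rw [hueq]; exact (cd_deriv hw').sub (hw'.pow 2)
  have hfeq : f = fun z => ∑ l ∈ Finset.Icc 1 n, t l * lenard u l z := funext hf
  have hcf : ContDiff ℝ (⊤:ℕ∞) f := by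
    rw [hfeq]; exact ContDiff.sum fun l _ => contDiff_const.mul (lenard_smooth hcu l)
  have hFeq : F = fun z => (∑ l ∈ Finset.Icc 1 n, t l * lenard u (l + 1) z) - z * u z :=
    funext hF
  have hcF : ContDiff ℝ (⊤:ℕ∞) F := by
    rw [hFeq]
    exact (ContDiff.sum fun l _ => contDiff_const.mul (lenard_smooth hcu (l+1))).sub
      (contDiff_id.mul hcu)
  -- derivative of u in terms of w
  have hdu' : ∀ z : ℝ, deriv u z = deriv (deriv w) z - 2 * w z * deriv w z := by
    intro z
    rw [hueq]
    have H := (cd_hd (cd_deriv hw') z).sub ((cd_hd hw' z).pow 2)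
    rw [show (fun z => deriv w z - w z ^ 2) = deriv w - w ^ 2 from rfl, H.deriv]; push_cast; ring
  -- derivatives of f as sums
  have S1 : ∀ z : ℝ, deriv f z = ∑ l ∈ Finset.Icc 1 n, t l * deriv (lenard u l) z := by
    intro z; rw [hfeq]
    exact (HasDerivAt.fun_sum fun l _ => (cd_hd (lenard_smooth hcu l) z).const_mul (t l)).deriv
  have S1fun := funext S1
  have S2 : ∀ z : ℝ, deriv (deriv f) z
      = ∑ l ∈ Finset.Icc 1 n, t l * deriv (deriv (lenard u l)) z := by
    intro z; rw [S1fun]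
    exact (HasDerivAt.fun_sum fun l _ =>
      (cd_hd (cd_deriv (lenard_smooth hcu l)) z).const_mul (t l)).deriv
  have S2fun := funext S2
  have S3 : ∀ z : ℝ, deriv (deriv (deriv f)) z
      = ∑ l ∈ Finset.Icc 1 n, t l * deriv (deriv (deriv (lenard u l))) z := by
    intro z; rw [S2fun]
    exact (HasDerivAt.fun_sum fun l _ =>
      (cd_hd (cd_deriv (cd_deriv (lenard_smooth hcu l))) z).const_mul (t l)).deriv
  -- derivative of F
  have hFd : ∀ z : ℝ, deriv F z
      = (∑ l ∈ Finset.Icc 1 n, t l * deriv (lenard u (l+1)) z) - (1 * u z + z * deriv u z) := by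
    intro z; rw [hFeq]
    exact ((HasDerivAt.fun_sum fun l _ => (cd_hd (lenard_smooth hcu (l+1)) z).const_mul (t l)).sub
      ((hasDerivAt_id z).mul (cd_hd hcu z))).deriv
  -- the Lenard identity applied to the sum
  have hKey : ∀ z : ℝ, (∑ l ∈ Finset.Icc 1 n, t l * deriv (lenard u (l+1)) z)
      = deriv (deriv (deriv f)) z + 4 * u z * deriv f z + 2 * deriv u z * f z := by
    intro z
    have e : (∑ l ∈ Finset.Icc 1 n, t l * deriv (lenard u (l+1)) z)
        = ∑ l ∈ Finset.Icc 1 n, (t l * deriv (deriv (deriv (lenard u l))) z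
            + 4 * u z * (t l * deriv (lenard u l) z) + 2 * deriv u z * (t l * lenard u l z)) := by
      refine Finset.sum_congr rfl fun l hl => ?_
      rw [lenard_deriv hcu l (Finset.mem_Icc.mp hl).1 z]; ring
    rw [e]
    simp only [Finset.sum_add_distrib, ← Finset.mul_sum]
    rw [← S3 z, ← S1 z, ← hf z]
  -- derivatives of f in terms of w via the Painlevé equation
  have hP1 : ∀ z : ℝ, deriv f z = z * w z + α - 2 * w z * f z := fun z => by linarith [hP z]
  have hP1fun := funext hP1
  have hP2 : ∀ z : ℝ, deriv (deriv f) z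
      = w z + z * deriv w z - 2 * deriv w z * f z - 2 * w z * deriv f z := by
    intro z
    conv_lhs => rw [hP1fun]
    have H := (((hasDerivAt_id z).mul (cd_hd hw' z)).add_const α).sub
      (((cd_hd hw' z).const_mul 2).mul (cd_hd hcf z))
    exact H.deriv.trans (by simp only [id_eq]; ring)
  have hP2fun := funext hP2
  have hP3 : ∀ z : ℝ, deriv (deriv (deriv f)) z
      = 2 * deriv w z + z * deriv (deriv w) z - 2 * deriv (deriv w) z * f z
        - 4 * deriv w z * deriv f z - 2 * w z * deriv (deriv f) z := by
    intro z
    conv_lhs => rw [hP2fun]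
    have H := (((cd_hd hw' z).add ((hasDerivAt_id z).mul (cd_hd (cd_deriv hw') z))).sub
      (((cd_hd (cd_deriv hw') z).const_mul 2).mul (cd_hd hcf z))).sub
      (((cd_hd hw' z).const_mul 2).mul (cd_hd (cd_deriv hcf) z))
    exact H.deriv.trans (by simp only [id_eq]; ring)
  have main : ∀ z : ℝ, deriv F z = u z := by
    intro z
    rw [hFd z, hKey z, hP3 z, hP2 z, hP1 z, hdu' z, hu z]
    ring
  refine ⟨main, fun z => ?_⟩
  have hσeq : σ = fun z => F z + (t (n - 1) / 2) * z := funext hσ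
  rw [hσeq]
  have H := (cd_hd hcF z).add ((hasDerivAt_id z).const_mul (t (n - 1) / 2))
  exact H.deriv.trans (by rw [main z]; ring)
end

section
/- Let a ∈ ℝ and let u : ℝ → ℝ be the constant function u(z) = a. Then for every k ≥ 0, the Lenard operator L_k[u] is the constant function with value (1/2)·binomial(2k, k)·a^k. -/
open Finset Nat

theorem centralBinom_succ_add_two_mul_catalan (n : ℕ) :
    centralBinom (n + 1) + 2 * catalan n = 4 * centralBinom n := by
  refine Nat.eq_of_mul_eq_mul_left (by positivity : 0 < n + 1) ?_
  linear_combination succ_mul_centralBinom_succ n + 2 * succ_mul_catalan_eq_centralBinom n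

theorem two_mul_sum_antidiagonal_catalan_mul_centralBinom (n : ℕ) :
    2 * ∑ ij ∈ antidiagonal n, catalan ij.1 * centralBinom ij.2 = centralBinom (n + 1) := by
  have hsymm : ∑ ij ∈ antidiagonal n, catalan ij.1 * centralBinom ij.2
      = ∑ ij ∈ antidiagonal n, catalan ij.2 * centralBinom ij.1 := by
    rw [← Finset.Nat.sum_antidiagonal_swap]; rfl
  calc 2 * ∑ ij ∈ antidiagonal n, catalan ij.1 * centralBinom ij.2
      = ∑ ij ∈ antidiagonal n, (n + 2) * (catalan ij.1 * catalan ij.2) := by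
        rw [two_mul]
        nth_rewrite 2 [hsymm]
        rw [← sum_add_distrib]
        refine sum_congr rfl fun ij hij => ?_
        rw [HasAntidiagonal.mem_antidiagonal] at hij
        rw [← succ_mul_catalan_eq_centralBinom, ← succ_mul_catalan_eq_centralBinom, ← hij]
        ring
    _ = (n + 2) * catalan (n + 1) := by rw [← mul_sum, catalan_succ']
    _ = centralBinom (n + 1) := succ_mul_catalan_eq_centralBinom (n + 1)

theorem centralBinom_add_two (k : ℕ) :
    centralBinom (k + 2)
      = 3 * centralBinom (k + 1) + ∑ j ∈ range k, centralBinom (k - j) * catalan (j + 1) := by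
  have hconv := two_mul_sum_antidiagonal_catalan_mul_centralBinom (k + 1)
  rw [Finset.Nat.sum_antidiagonal_succ,
    Finset.Nat.sum_antidiagonal_eq_sum_range_succ (fun i j => catalan (i + 1) * centralBinom j),
    sum_range_succ] at hconv
  have hcat := centralBinom_succ_add_two_mul_catalan (k + 1)
  simp only [catalan_zero, centralBinom_zero, Nat.sub_self, one_mul, mul_one] at hconv
  rw [show k + 1 + 1 = k + 2 from rfl] at hconv hcat
  simp only [mul_comm (centralBinom _)]
  omega

theorem lenard_add_two_of_forall_le_eq_const {u : ℝ → ℝ} {k : ℕ} {v : ℕ → ℝ}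
    (hv : ∀ n ≤ k + 1, lenard u n = fun _ => v n) (z : ℝ) :
    lenard u (k + 2) z = 3 * v (k + 1) * v 1
      + ∑ j ∈ range k, v (k - j) * (4 * v 1 * v (j + 1) - v (j + 2)) := by
  rw [lenard, ← sum_attach (range k)]
  simp only [hv (k + 1) le_rfl, hv 1 (by omega), deriv_const', zero_add]
  congr 1
  refine sum_congr rfl fun j _ => ?_
  have hj := mem_range.mp j.2
  simp only [hv (k - j) (by omega), hv (j + 1) (by omega), hv (j + 2) (by omega), deriv_const',
    mul_zero, add_zero, sub_zero]

theorem lenard_const (a : ℝ) (k : ℕ) :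
    lenard (fun _ => a) k = fun _ => (1 / 2) * (centralBinom k : ℝ) * a ^ k := by
  induction k using Nat.strong_induction_on with
  | _ k ih =>
    match k with
    | 0 => funext; simp [lenard]
    | 1 => funext; norm_num [lenard, centralBinom_eq_two_mul_choose]
    | k + 2 =>
      funext z
      rw [lenard_add_two_of_forall_le_eq_const (fun n hn => ih n (by omega))]
      have hc1 : (centralBinom 1 : ℝ) = 2 := by norm_num [centralBinom_eq_two_mul_choose]
      have hrec : (centralBinom (k + 2) : ℝ)
          = 3 * centralBinom (k + 1) + ∑ j ∈ range k, (centralBinom (k - j) : ℝ) * catalan (j + 1) :=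
        mod_cast centralBinom_add_two k
      have hterm : ∀ j ∈ range k,
          1 / 2 * (centralBinom (k - j) : ℝ) * a ^ (k - j) *
              (4 * (1 / 2 * centralBinom 1 * a ^ 1) * (1 / 2 * centralBinom (j + 1) * a ^ (j + 1))
                - 1 / 2 * centralBinom (j + 2) * a ^ (j + 2))
            = (centralBinom (k - j) : ℝ) * catalan (j + 1) * (1 / 2 * a ^ (k + 2)) := by
        intro j hj
        have hpow : a ^ (k - j) * a ^ (j + 2) = a ^ (k + 2) := by
          rw [← pow_add]; congr 1; have := mem_range.mp hj; omega
        have hcat : (centralBinom (j + 2) : ℝ) + 2 * catalan (j + 1) = 4 * centralBinom (j + 1) :=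
          mod_cast centralBinom_succ_add_two_mul_catalan (j + 1)
        rw [hc1]
        linear_combination (-(1 / 4) * (centralBinom (k - j) : ℝ) * a ^ (k - j) * a ^ (j + 2)) * hcat
          + (1 / 2 * (centralBinom (k - j) : ℝ) * catalan (j + 1)) * hpow
      rw [sum_congr rfl hterm, ← sum_mul, hrec, hc1]
      ring

/-- **Boundary values of the Lenard operators** (Lemma 3.2 of the paper): applied to a
constant function `a`, the Lenard operator `L_k` is the constant `(1/2)·C(2k, k)·aᵏ`. -/
theorem lenard_constant_value (a : ℝ) :
    ∀ (k : ℕ) (z : ℝ),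
      lenard (fun _ => a) k z = (1 / 2) * (Nat.choose (2 * k) k : ℝ) * a ^ k := by
  intro k z
  rw [lenard_const a k, centralBinom_eq_two_mul_choose]
end

section
/- Let α ∈ ℝ and let w : ℝ → ℝ be twice differentiable with w''(z) = 2·w(z)³ + z·w(z) + α for all z ∈ ℝ. Then the function σ(z) := (w'(z))² − w(z)⁴ − z·w(z)² − (2α − 1)·w(z) − z²/4 satisfies σ'(z) = w'(z) − w(z)² − z/2 for all z ∈ ℝ. -/
theorem hasDerivAt_sigma_of_painleveII {α z : ℝ} {w v : ℝ → ℝ}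
    (hw : HasDerivAt w (v z) z)
    (hv : HasDerivAt v (2 * (w z) ^ 3 + z * w z + α) z) :
    HasDerivAt (fun z => (v z) ^ 2 - (w z) ^ 4 - z * (w z) ^ 2 - (2 * α - 1) * w z - z ^ 2 / 4)
      (v z - (w z) ^ 2 - z / 2) z := by
  have h := ((((hv.pow 2).sub (hw.pow 4)).sub ((hasDerivAt_id' z).mul (hw.pow 2))).sub
    (hw.const_mul (2 * α - 1))).sub ((hasDerivAt_pow 2 z).div_const 4)
  refine h.congr_deriv ?_
  simp only [Pi.pow_apply, Nat.cast_ofNat]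
  -- `2 v v' = 2 v (2w³ + zw + α)` cancels every other multiple of `v z`, leaving `v z`
  ring

/-- **`n = 1` instance of Lemma 3.1 of the paper**: if `w` is twice differentiable with
`w'' = 2w³ + zw + α`, then `σ(z) = (w')² - w⁴ - z w² - (2α - 1) w - z²/4` satisfies
`σ' = w' - w² - z/2`. -/
theorem sigma_derivative_PII
    (α : ℝ) (w : ℝ → ℝ)
    (hw1 : Differentiable ℝ w) (hw2 : Differentiable ℝ (deriv w))
    (hP : ∀ z : ℝ, deriv (deriv w) z = 2 * (w z) ^ 3 + z * w z + α)
    (σ : ℝ → ℝ)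
    (hσ : ∀ z : ℝ, σ z =
      (deriv w z) ^ 2 - (w z) ^ 4 - z * (w z) ^ 2 - (2 * α - 1) * w z - z ^ 2 / 4) :
    ∀ z : ℝ, deriv σ z = deriv w z - (w z) ^ 2 - z / 2 := by
  intro z
  have hv : HasDerivAt (deriv w) (2 * (w z) ^ 3 + z * w z + α) z := hP z ▸ (hw2 z).hasDerivAt
  rw [funext hσ]
  exact (hasDerivAt_sigma_of_painleveII (hw1 z).hasDerivAt hv).deriv
end

section
/- Let α ∈ ℝ and let σ : ℝ → ℝ be smooth with σ'(z) ≠ 0 and σ''(z) ≠ 0 for all z ∈ ℝ, and suppose (σ''(z))² − 2·σ(z)·σ'(z) + 2·z·(σ'(z))² + 2·(σ'(z))³ = (α − 1/2)² for all z ∈ ℝ. Define w : ℝ → ℝ by w(z) := (α − 1/2 − σ''(z)) / (2·σ'(z)). Then w''(z) = 2·w(z)³ + z·w(z) + α for all z ∈ ℝ. -/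
/-- **Converse direction of the sigma-form equivalence for `n = 1`**: if `σ` is a smooth
solution of the sigma form `(σ'')² - 2 σ σ' + 2 z (σ')² + 2 (σ')³ = (α - 1/2)²` with
`σ'(z) ≠ 0` and `σ''(z) ≠ 0` everywhere, then `w = (α - 1/2 - σ'')/(2 σ')` solves P_II:
`w'' = 2w³ + zw + α`. -/
theorem sigma_form_to_PII
    (α : ℝ) (σ : ℝ → ℝ) (hσ : ContDiff ℝ (⊤ : ℕ∞) σ)
    (h1 : ∀ z : ℝ, deriv σ z ≠ 0) (h2 : ∀ z : ℝ, deriv (deriv σ) z ≠ 0)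
    (heq : ∀ z : ℝ,
      (deriv (deriv σ) z) ^ 2 - 2 * σ z * deriv σ z + 2 * z * (deriv σ z) ^ 2
        + 2 * (deriv σ z) ^ 3 = (α - 1 / 2) ^ 2)
    (w : ℝ → ℝ)
    (hw : ∀ z : ℝ, w z = (α - 1 / 2 - deriv (deriv σ) z) / (2 * deriv σ z)) :
    ∀ z : ℝ, deriv (deriv w) z = 2 * (w z) ^ 3 + z * w z + α := by
  set b : ℝ := α - 1/2 with hb
  set s : ℝ → ℝ := deriv σ with hs_def
  set p : ℝ → ℝ := deriv s with hp_def
  set q : ℝ → ℝ := deriv p with hq_def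
  have hσ' : ContDiff ℝ (⊤ : ℕ∞) σ := hσ.of_le (by simp)
  have hs : ContDiff ℝ (⊤ : ℕ∞) s := (contDiff_infty_iff_deriv.mp hσ').2
  have hp : ContDiff ℝ (⊤ : ℕ∞) p := (contDiff_infty_iff_deriv.mp hs).2
  have hσd : ∀ z : ℝ, HasDerivAt σ (s z) z :=
    fun z => (hσ.differentiable (by simp) z).hasDerivAt
  have hsd : ∀ z : ℝ, HasDerivAt s (p z) z :=
    fun z => (hs.differentiable (by simp) z).hasDerivAt
  have hpd : ∀ z : ℝ, HasDerivAt p (q z) z :=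
    fun z => (hp.differentiable (by simp) z).hasDerivAt
  -- Step 1: q = σ - 2 z s - 3 s²
  have h3 : ∀ z : ℝ, q z = σ z - 2 * z * s z - 3 * (s z) ^ 2 := by
    intro z
    have hF : HasDerivAt
        (fun x => (p x) ^ 2 - 2 * σ x * s x + 2 * x * (s x) ^ 2 + 2 * (s x) ^ 3)
        ((2 : ℕ) * p z ^ 1 * q z
          - ((2 * s z) * s z + (2 * σ z) * p z)
          + (2 * (s z) ^ 2 + (2 * z) * ((2 : ℕ) * s z ^ 1 * p z))
          + (2 * ((3 : ℕ) * s z ^ 2 * p z))) z := by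
      have t1 : HasDerivAt (fun x => (p x) ^ 2) ((2 : ℕ) * p z ^ 1 * q z) z :=
        (hpd z).pow 2
      have t2 : HasDerivAt (fun x => 2 * σ x * s x)
          ((2 * s z) * s z + (2 * σ z) * p z) z :=
        ((hσd z).const_mul 2).mul (hsd z)
      have t3 : HasDerivAt (fun x => 2 * x * (s x) ^ 2)
          (2 * (s z) ^ 2 + (2 * z) * ((2 : ℕ) * s z ^ 1 * p z)) z := by
        have := (((hasDerivAt_id z).const_mul 2)).mul ((hsd z).pow 2)
        simp only [Pi.mul_def, Pi.pow_def] at this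
        simpa [mul_comm] using this
      have t4 : HasDerivAt (fun x => 2 * (s x) ^ 3)
          (2 * ((3 : ℕ) * s z ^ 2 * p z)) z :=
        ((hsd z).pow 3).const_mul 2
      exact ((t1.sub t2).add t3).add t4
    have hFc : (fun x => (p x) ^ 2 - 2 * σ x * s x + 2 * x * (s x) ^ 2 + 2 * (s x) ^ 3)
        = fun _ => b ^ 2 := funext fun x => heq x
    have hd0 : ((2 : ℕ) * p z ^ 1 * q z
          - ((2 * s z) * s z + (2 * σ z) * p z)
          + (2 * (s z) ^ 2 + (2 * z) * ((2 : ℕ) * s z ^ 1 * p z))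
          + (2 * ((3 : ℕ) * s z ^ 2 * p z))) = 0 := by
      have := hF.deriv
      rw [hFc, deriv_const] at this
      linarith [this]
    have hfac : 2 * p z * (q z - (σ z - 2 * z * s z - 3 * (s z) ^ 2)) = 0 := by
      push_cast at hd0
      linear_combination hd0
    rcases mul_eq_zero.mp hfac with h | h
    · exact absurd (by linarith : p z = 0) (h2 z)
    · linarith [sub_eq_zero.mp h]
  -- Step 2: first derivative of w
  have hweq : w = fun x => (b - p x) / (2 * s x) := funext fun x => hw x
  set W1 : ℝ → ℝ := fun x =>
    (-(σ x - 2 * x * s x - 3 * (s x) ^ 2) * (2 * s x) - (b - p x) * (2 * p x))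
      / (2 * s x) ^ 2 with hW1_def
  have hwd : ∀ z : ℝ, HasDerivAt w (W1 z) z := by
    intro z
    have hden : (2 : ℝ) * s z ≠ 0 := by
      simp [h1 z]
    have := ((hasDerivAt_const z b).sub (hpd z)).div ((hsd z).const_mul 2) hden
    simp only [Pi.sub_def, Pi.div_def] at this
    rw [← hweq] at this
    refine this.congr_deriv ?_
    simp only [hW1_def, h3 z]
    ring
  have hderivw : deriv w = W1 := funext fun z => (hwd z).deriv
  -- Step 3: second derivative
  intro z
  have hsne := h1 z
  have hden2 : ((2 : ℝ) * s z) ^ 2 ≠ 0 := by positivity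
  -- derivative of numerator of W1
  have hinner : HasDerivAt (fun x => σ x - 2 * x * s x - 3 * (s x) ^ 2)
      (s z - (2 * s z + (2 * z) * p z) - 3 * ((2 : ℕ) * s z ^ 1 * p z)) z := by
    have t2 : HasDerivAt (fun x => 2 * x * s x) (2 * s z + (2 * z) * p z) z := by
      have := ((hasDerivAt_id z).const_mul 2).mul (hsd z)
      simp only [Pi.mul_def] at this
      simpa [mul_comm] using this
    have t3 : HasDerivAt (fun x => 3 * (s x) ^ 2) (3 * ((2 : ℕ) * s z ^ 1 * p z)) z :=
      ((hsd z).pow 2).const_mul 3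
    exact ((hσd z).sub t2).sub t3
  have hN : HasDerivAt
      (fun x => -(σ x - 2 * x * s x - 3 * (s x) ^ 2) * (2 * s x) - (b - p x) * (2 * p x))
      ((-(s z - (2 * s z + (2 * z) * p z) - 3 * ((2 : ℕ) * s z ^ 1 * p z))) * (2 * s z)
          + (-(σ z - 2 * z * s z - 3 * (s z) ^ 2)) * (2 * p z)
        - ((0 - q z) * (2 * p z) + (b - p z) * (2 * q z))) z := by
    have tA := (hinner.neg).mul ((hsd z).const_mul 2)
    have tB := ((hasDerivAt_const z b).sub (hpd z)).mul ((hpd z).const_mul 2)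
    exact tA.sub tB
  have hD : HasDerivAt (fun x => (2 * s x) ^ 2)
      ((2 : ℕ) * (2 * s z) ^ 1 * (2 * p z)) z := ((hsd z).const_mul 2).pow 2
  have hW1d := hN.div hD hden2
  simp only [Pi.div_def] at hW1d
  rw [← hW1_def] at hW1d
  rw [hderivw, hW1d.deriv, hw z, h3 z]
  have hpz := h2 z
  have hbz : α = b + 1/2 := by rw [hb]; ring
  have hrel := heq z
  rw [hbz]
  push_cast
  field_simp
  linear_combination (α - 1/2 - 3 * p z) * hrel
    + (α - 1/2 - 3 * p z) * (b + (α - 1/2)) * hb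
end

section
/- Let t_1 ∈ ℝ and α ∈ ℝ. Let w : ℝ → ℝ be smooth, set u := w' − w² and f_2 := t_1·u + L_2[u] (where L_2[u] = u'' + 3u²), and suppose w solves P_II^(2), i.e. f_2'(z) + 2·w(z)·f_2(z) = z·w(z) + α for all z ∈ ℝ, and that z − 2·f_2(z) ≠ 0 for all z ∈ ℝ. Define σ : ℝ → ℝ by σ(z) := t_1·L_2[u](z) + L_3[u](z) − z·u(z) + (t_1/2)·z, where L_3[u] = u'''' + 10·u·u'' + 5·(u')² + 10·u³. Then for all z ∈ ℝ: (σ'''')² + 12·σ'·σ''·σ'''' − 4·t_1·σ''·σ'''' − σ'''' + 4·σ'·(σ''')² − 2·t_1·(σ''')² − 2·(σ'')²·σ''' + 20·(σ')³·σ''' − 24·t_1·(σ')²·σ''' + 9·t_1²·σ'·σ''' − 2·z·σ'·σ''' − t_1³·σ''' + 2·z·t_1·σ''' − 2·σ·σ''' + 30·(σ')²·(σ'')² − 20·t_1·σ'·(σ'')² + (7/2)·t_1²·(σ'')² + z·(σ'')² − 6·σ'·σ'' + 2·t_1·σ'' + 24·(σ')⁵ − 46·t_1·(σ')⁴ + 34·t_1²·(σ')³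 − 4·z·(σ')³ − 12·t_1³·(σ')² + 8·z·t_1·(σ')² − 6·σ·(σ')² + 2·t_1⁴·σ' − 4·z·t_1²·σ' + 4·t_1·σ·σ' − (1/8)·t_1⁵ + (1/2)·t_1³·z − (1/2)·t_1²·σ − (1/2)·t_1·z² + z·σ = α·(α − 1). -/
/-- **Sigma form of P_II^(2)** (Example `n = 2` of the paper). Let `w` be a smooth solution
of `P_II^(2)`: with `u = w' - w²`, `L₂[u] = u'' + 3u²`, `f₂ = t₁ u + L₂[u]`, one has
`f₂' + 2 w f₂ = z w + α`, and suppose `z - 2 f₂(z) ≠ 0` everywhere. Then the sigma function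
`σ = t₁ L₂[u] + L₃[u] - z u + (t₁/2) z`, where `L₃[u] = u'''' + 10 u u'' + 5 (u')² + 10 u³`,
satisfies the displayed fourth-order ODE (here `d1, d2, d3, d4` denote the first through
fourth derivatives of `σ`). -/
theorem sigma_form_PII_n_two
    (t₁ α : ℝ) (w : ℝ → ℝ) (hw : ContDiff ℝ (⊤ : ℕ∞) w)
    (u f σ : ℝ → ℝ)
    (hu : ∀ z : ℝ, u z = deriv w z - (w z) ^ 2)
    (hf : ∀ z : ℝ, f z = t₁ * u z + (deriv (deriv u) z + 3 * (u z) ^ 2))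
    (hP : ∀ z : ℝ, deriv f z + 2 * w z * f z = z * w z + α)
    (hne : ∀ z : ℝ, z - 2 * f z ≠ 0)
    (hσ : ∀ z : ℝ, σ z =
      t₁ * (deriv (deriv u) z + 3 * (u z) ^ 2)
        + (deriv (deriv (deriv (deriv u))) z + 10 * u z * deriv (deriv u) z
            + 5 * (deriv u z) ^ 2 + 10 * (u z) ^ 3)
        - z * u z + (t₁ / 2) * z)
    (d1 d2 d3 d4 : ℝ → ℝ)
    (hd1 : d1 = deriv σ) (hd2 : d2 = deriv d1) (hd3 : d3 = deriv d2) (hd4 : d4 = deriv d3) :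
    ∀ z : ℝ,
      (d4 z) ^ 2 + 12 * d1 z * d2 z * d4 z - 4 * t₁ * d2 z * d4 z - d4 z
        + 4 * d1 z * (d3 z) ^ 2 - 2 * t₁ * (d3 z) ^ 2
        - 2 * (d2 z) ^ 2 * d3 z + 20 * (d1 z) ^ 3 * d3 z - 24 * t₁ * (d1 z) ^ 2 * d3 z
        + 9 * t₁ ^ 2 * d1 z * d3 z - 2 * z * d1 z * d3 z - t₁ ^ 3 * d3 z
        + 2 * z * t₁ * d3 z - 2 * σ z * d3 z
        + 30 * (d1 z) ^ 2 * (d2 z) ^ 2 - 20 * t₁ * d1 z * (d2 z) ^ 2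
        + (7 / 2) * t₁ ^ 2 * (d2 z) ^ 2 + z * (d2 z) ^ 2
        - 6 * d1 z * d2 z + 2 * t₁ * d2 z
        + 24 * (d1 z) ^ 5 - 46 * t₁ * (d1 z) ^ 4 + 34 * t₁ ^ 2 * (d1 z) ^ 3
        - 4 * z * (d1 z) ^ 3 - 12 * t₁ ^ 3 * (d1 z) ^ 2 + 8 * z * t₁ * (d1 z) ^ 2
        - 6 * σ z * (d1 z) ^ 2
        + 2 * t₁ ^ 4 * d1 z - 4 * z * t₁ ^ 2 * d1 z + 4 * t₁ * σ z * d1 z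
        - (1 / 8) * t₁ ^ 5 + (1 / 2) * t₁ ^ 3 * z - (1 / 2) * t₁ ^ 2 * σ z
        - (1 / 2) * t₁ * z ^ 2 + z * σ z
        = α * (α - 1) := by
  have hw' : ContDiff ℝ (⊤:ℕ∞) w := hw.of_le (by simp)
  have c0 : ContDiff ℝ (⊤:ℕ∞) w := hw'
  have c1 : ContDiff ℝ (⊤:ℕ∞) (deriv w) := (contDiff_infty_iff_deriv.mp c0).2
  have c2 : ContDiff ℝ (⊤:ℕ∞) (deriv (deriv w)) := (contDiff_infty_iff_deriv.mp c1).2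
  have c3 : ContDiff ℝ (⊤:ℕ∞) (deriv (deriv (deriv w))) := (contDiff_infty_iff_deriv.mp c2).2
  have c4 : ContDiff ℝ (⊤:ℕ∞) (deriv (deriv (deriv (deriv w)))) := (contDiff_infty_iff_deriv.mp c3).2
  have c5 : ContDiff ℝ (⊤:ℕ∞) (deriv (deriv (deriv (deriv (deriv w))))) := (contDiff_infty_iff_deriv.mp c4).2
  have hid : ∀ y : ℝ, HasDerivAt (fun t : ℝ => t) 1 y := fun y => hasDerivAt_id y
  have hD0 : ∀ y : ℝ, HasDerivAt (w) (deriv w y) y := fun y => (c0.differentiable (by norm_num) y).hasDerivAt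
  have hD1 : ∀ y : ℝ, HasDerivAt (deriv w) ((deriv (deriv w)) y) y := fun y => (c1.differentiable (by norm_num) y).hasDerivAt
  have hD2 : ∀ y : ℝ, HasDerivAt (deriv (deriv w)) ((deriv (deriv (deriv w))) y) y := fun y => (c2.differentiable (by norm_num) y).hasDerivAt
  have hD3 : ∀ y : ℝ, HasDerivAt (deriv (deriv (deriv w))) ((deriv (deriv (deriv (deriv w)))) y) y := fun y => (c3.differentiable (by norm_num) y).hasDerivAt
  have hD4 : ∀ y : ℝ, HasDerivAt (deriv (deriv (deriv (deriv w)))) ((deriv (deriv (deriv (deriv (deriv w))))) y) y := fun y => (c4.differentiable (by norm_num) y).hasDerivAt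
  have hD5 : ∀ y : ℝ, HasDerivAt (deriv (deriv (deriv (deriv (deriv w))))) ((deriv (deriv (deriv (deriv (deriv (deriv w)))))) y) y := fun y => (c5.differentiable (by norm_num) y).hasDerivAt
  have hu0 : u = fun x : ℝ => deriv w x - w x ^ 2 := funext hu
  have hu1 : deriv u = fun x : ℝ => (1 : ℝ) * (deriv (deriv w)) x + (-2 : ℝ) * (w x * deriv w x) := by
    rw [hu0]
    funext y
    have Hc := (hD1 y).sub ((hD0 y).pow 2)
    have H : HasDerivAt (fun x : ℝ => deriv w x - w x ^ 2) ((1 : ℝ) * (deriv (deriv w)) y + (-2 : ℝ) * (w y * deriv w y)) y := by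
      refine Hc.congr_deriv ?_
      push_cast
      ring
    exact H.deriv
  have hu2 : deriv (deriv (u)) = fun x : ℝ => (1 : ℝ) * (deriv (deriv (deriv w))) x + (-2 : ℝ) * deriv w x ^ 2 + (-2 : ℝ) * (w x * (deriv (deriv w)) x) := by
    rw [hu1]
    funext y
    have Hc := (((hD2 y).const_mul ((1 : ℝ))).add (((hD0 y).mul (hD1 y)).const_mul ((-2 : ℝ))))
    have H : HasDerivAt (fun x : ℝ => (1 : ℝ) * (deriv (deriv w)) x + (-2 : ℝ) * (w x * deriv w x)) ((1 : ℝ) * (deriv (deriv (deriv w))) y + (-2 : ℝ) * deriv w y ^ 2 + (-2 : ℝ) * (w y * (deriv (deriv w)) y)) y := by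
      refine Hc.congr_deriv ?_
      push_cast
      ring
    exact H.deriv
  have hu3 : deriv (deriv (deriv (u))) = fun x : ℝ => (1 : ℝ) * (deriv (deriv (deriv (deriv w)))) x + (-6 : ℝ) * (deriv w x * (deriv (deriv w)) x) + (-2 : ℝ) * (w x * (deriv (deriv (deriv w))) x) := by
    rw [hu2]
    funext y
    have Hc := ((((hD3 y).const_mul ((1 : ℝ))).add (((hD1 y).pow 2).const_mul ((-2 : ℝ)))).add (((hD0 y).mul (hD2 y)).const_mul ((-2 : ℝ))))
    have H : HasDerivAt (fun x : ℝ => (1 : ℝ) * (deriv (deriv (deriv w))) x + (-2 : ℝ) * deriv w x ^ 2 + (-2 : ℝ) * (w x * (deriv (deriv w)) x)) ((1 : ℝ) * (deriv (deriv (deriv (deriv w)))) y + (-6 : ℝ) * (deriv w y * (deriv (deriv w)) y) + (-2 : ℝ) * (w y * (deriv (deriv (deriv w))) y)) y := by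
      refine Hc.congr_deriv ?_
      push_cast
      ring
    exact H.deriv
  have hu4 : deriv (deriv (deriv (deriv (u)))) = fun x : ℝ => (1 : ℝ) * (deriv (deriv (deriv (deriv (deriv w))))) x + (-6 : ℝ) * (deriv (deriv w)) x ^ 2 + (-8 : ℝ) * (deriv w x * (deriv (deriv (deriv w))) x) + (-2 : ℝ) * (w x * (deriv (deriv (deriv (deriv w)))) x) := by
    rw [hu3]
    funext y
    have Hc := ((((hD4 y).const_mul ((1 : ℝ))).add (((hD1 y).mul (hD2 y)).const_mul ((-6 : ℝ)))).add (((hD0 y).mul (hD3 y)).const_mul ((-2 : ℝ))))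
    have H : HasDerivAt (fun x : ℝ => (1 : ℝ) * (deriv (deriv (deriv (deriv w)))) x + (-6 : ℝ) * (deriv w x * (deriv (deriv w)) x) + (-2 : ℝ) * (w x * (deriv (deriv (deriv w))) x)) ((1 : ℝ) * (deriv (deriv (deriv (deriv (deriv w))))) y + (-6 : ℝ) * (deriv (deriv w)) y ^ 2 + (-8 : ℝ) * (deriv w y * (deriv (deriv (deriv w))) y) + (-2 : ℝ) * (w y * (deriv (deriv (deriv (deriv w)))) y)) y := by
      refine Hc.congr_deriv ?_
      push_cast
      ring
    exact H.deriv
  have hf0 : f = fun x : ℝ => (1 : ℝ) * (deriv (deriv (deriv w))) x + (1 : ℝ) * deriv w x ^ 2 + (-2 : ℝ) * (w x * (deriv (deriv w)) x) + (-6 : ℝ) * (w x ^ 2 * deriv w x) + (3 : ℝ) * w x ^ 4 + t₁ * deriv w x + (-1 : ℝ) * t₁ * w x ^ 2 := by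
    funext y
    rw [hf y, congrFun hu2 y, hu y]
    ring
  have hf1 : deriv (f) = fun x : ℝ => (1 : ℝ) * (deriv (deriv (deriv (deriv w)))) x + (-2 : ℝ) * (w x * (deriv (deriv (deriv w))) x) + (-12 : ℝ) * (w x * deriv w x ^ 2) + (-6 : ℝ) * (w x ^ 2 * (deriv (deriv w)) x) + (12 : ℝ) * (w x ^ 3 * deriv w x) + t₁ * (deriv (deriv w)) x + (-2 : ℝ) * t₁ * (w x * deriv w x) := by
    rw [hf0]
    funext y
    have Hc := ((((((((hD3 y).const_mul ((1 : ℝ))).add (((hD1 y).pow 2).const_mul ((1 : ℝ)))).add (((hD0 y).mul (hD2 y)).const_mul ((-2 : ℝ)))).add ((((hD0 y).pow 2).mul (hD1 y)).const_mul ((-6 : ℝ)))).add (((hD0 y).pow 4).const_mul ((3 : ℝ)))).add ((hD1 y).const_mul (t₁))).add (((hD0 y).pow 2).const_mul ((-1 : ℝ) * t₁)))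
    have H : HasDerivAt (fun x : ℝ => (1 : ℝ) * (deriv (deriv (deriv w))) x + (1 : ℝ) * deriv w x ^ 2 + (-2 : ℝ) * (w x * (deriv (deriv w)) x) + (-6 : ℝ) * (w x ^ 2 * deriv w x) + (3 : ℝ) * w x ^ 4 + t₁ * deriv w x + (-1 : ℝ) * t₁ * w x ^ 2) ((1 : ℝ) * (deriv (deriv (deriv (deriv w)))) y + (-2 : ℝ) * (w y * (deriv (deriv (deriv w))) y) + (-12 : ℝ) * (w y * deriv w y ^ 2) + (-6 : ℝ) * (w y ^ 2 * (deriv (deriv w)) y) + (12 : ℝ) * (w y ^ 3 * deriv w y) + t₁ * (deriv (deriv w)) y + (-2 : ℝ) * t₁ * (w y * deriv w y)) y := by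
      refine Hc.congr_deriv ?_
      push_cast [Pi.pow_apply]
      ring
    exact H.deriv
  have hs0 : σ = fun x : ℝ => (1 : ℝ) * (deriv (deriv (deriv (deriv (deriv w))))) x + (-1 : ℝ) * (deriv (deriv w)) x ^ 2 + (2 : ℝ) * (deriv w x * (deriv (deriv (deriv w))) x) + (-10 : ℝ) * deriv w x ^ 3 + (-2 : ℝ) * (w x * (deriv (deriv (deriv (deriv w)))) x) + (-40 : ℝ) * (w x * deriv w x * (deriv (deriv w)) x) + (-10 : ℝ) * (w x ^ 2 * (deriv (deriv (deriv w))) x) + (10 : ℝ) * (w x ^ 2 * deriv w x ^ 2) + (20 : ℝ) * (w x ^ 3 * (deriv (deriv w)) x) + (30 : ℝ) * (w x ^ 4 * deriv w x) + (-10 : ℝ) * w x ^ 6 + t₁ * (deriv (deriv (deriv w))) x + t₁ * deriv w x ^ 2 + (-2 : ℝ) * t₁ * (w x * (deriv (deriv w)) x) + (-6 : ℝ) * t₁ * (w x ^ 2 * deriv w x) + (3 : ℝ) * t₁ * w x ^ 4 + (-1 : ℝ) * (x * deriv w x) + (1 : ℝ) * (x * w x ^ 2) + ((1 : ℝ)/2)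 * t₁ * x := by
    funext y
    rw [hσ y, congrFun hu4 y, congrFun hu2 y, congrFun hu1 y, hu y]
    ring
  have hs1 : deriv (σ) = fun x : ℝ => (1 : ℝ) * (deriv (deriv (deriv (deriv (deriv (deriv w)))))) x + (-1 : ℝ) * deriv w x + (-70 : ℝ) * (deriv w x ^ 2 * (deriv (deriv w)) x) + (-2 : ℝ) * (w x * (deriv (deriv (deriv (deriv (deriv w))))) x) + (-40 : ℝ) * (w x * (deriv (deriv w)) x ^ 2) + (-60 : ℝ) * (w x * deriv w x * (deriv (deriv (deriv w))) x) + (20 : ℝ) * (w x * deriv w x ^ 3) + (1 : ℝ) * w x ^ 2 + (-10 : ℝ) * (w x ^ 2 * (deriv (deriv (deriv (deriv w)))) x) + (80 : ℝ) * (w x ^ 2 * deriv w x * (deriv (deriv w)) x) + (20 : ℝ) * (w x ^ 3 * (deriv (deriv (deriv w))) x) + (120 : ℝ) * (w x ^ 3 * deriv w x ^ 2) + (30 : ℝ) * (w x ^ 4 * (deriv (deriv w)) x) + (-60 : ℝ) * (w x ^ 5 * deriv w x) + ((1 : ℝ)/2) * t₁ + t₁ * (deriv (deriv (deriv (deriv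 w)))) x + (-2 : ℝ) * t₁ * (w x * (deriv (deriv (deriv w))) x) + (-12 : ℝ) * t₁ * (w x * deriv w x ^ 2) + (-6 : ℝ) * t₁ * (w x ^ 2 * (deriv (deriv w)) x) + (12 : ℝ) * t₁ * (w x ^ 3 * deriv w x) + (-1 : ℝ) * (x * (deriv (deriv w)) x) + (2 : ℝ) * (x * w x * deriv w x) := by
    rw [hs0]
    funext y
    have Hc := ((((((((((((((((((((hD5 y).const_mul ((1 : ℝ))).add (((hD2 y).pow 2).const_mul ((-1 : ℝ)))).add (((hD1 y).mul (hD3 y)).const_mul ((2 : ℝ)))).add (((hD1 y).pow 3).const_mul ((-10 : ℝ)))).add (((hD0 y).mul (hD4 y)).const_mul ((-2 : ℝ)))).add ((((hD0 y).mul (hD1 y)).mul (hD2 y)).const_mul ((-40 : ℝ)))).add ((((hD0 y).pow 2).mul (hD3 y)).const_mul ((-10 : ℝ)))).add ((((hD0 y).pow 2).mul ((hD1 y).pow 2)).const_mul ((10 : ℝ)))).add ((((hD0 y).pow 3).mul (hD2 y)).const_mul ((20 : ℝ)))).add ((((hD0 y).pow 4).mul (hD1 y)).const_mul ((30 : ℝ)))).add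 (((hD0 y).pow 6).const_mul ((-10 : ℝ)))).add ((hD3 y).const_mul (t₁))).add (((hD1 y).pow 2).const_mul (t₁))).add (((hD0 y).mul (hD2 y)).const_mul ((-2 : ℝ) * t₁))).add ((((hD0 y).pow 2).mul (hD1 y)).const_mul ((-6 : ℝ) * t₁))).add (((hD0 y).pow 4).const_mul ((3 : ℝ) * t₁))).add (((hid y).mul (hD1 y)).const_mul ((-1 : ℝ)))).add (((hid y).mul ((hD0 y).pow 2)).const_mul ((1 : ℝ)))).add ((hid y).const_mul (((1 : ℝ)/2) * t₁)))
    have H : HasDerivAt (fun x : ℝ => (1 : ℝ) * (deriv (deriv (deriv (deriv (deriv w))))) x + (-1 : ℝ) * (deriv (deriv w)) x ^ 2 + (2 : ℝ) * (deriv w x * (deriv (deriv (deriv w))) x) + (-10 : ℝ) * deriv w x ^ 3 + (-2 : ℝ) * (w x * (deriv (deriv (deriv (deriv w)))) x) + (-40 : ℝ) * (w x * deriv w x * (deriv (deriv w)) x) + (-10 : ℝ) * (w x ^ 2 * (deriv (deriv (deriv w))) x) + (10 : ℝ) * (w x ^ 2 * deriv w x ^ 2) + (20 : ℝ) * (w x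 ^ 3 * (deriv (deriv w)) x) + (30 : ℝ) * (w x ^ 4 * deriv w x) + (-10 : ℝ) * w x ^ 6 + t₁ * (deriv (deriv (deriv w))) x + t₁ * deriv w x ^ 2 + (-2 : ℝ) * t₁ * (w x * (deriv (deriv w)) x) + (-6 : ℝ) * t₁ * (w x ^ 2 * deriv w x) + (3 : ℝ) * t₁ * w x ^ 4 + (-1 : ℝ) * (x * deriv w x) + (1 : ℝ) * (x * w x ^ 2) + ((1 : ℝ)/2) * t₁ * x) ((1 : ℝ) * (deriv (deriv (deriv (deriv (deriv (deriv w)))))) y + (-1 : ℝ) * deriv w y + (-70 : ℝ) * (deriv w y ^ 2 * (deriv (deriv w)) y) + (-2 : ℝ) * (w y * (deriv (deriv (deriv (deriv (deriv w))))) y) + (-40 : ℝ) * (w y * (deriv (deriv w)) y ^ 2) + (-60 : ℝ) * (w y * deriv w y * (deriv (deriv (deriv w))) y) + (20 : ℝ) * (w y * deriv w y ^ 3) + (1 : ℝ) * w y ^ 2 + (-10 : ℝ) * (w y ^ 2 * (deriv (deriv (deriv (deriv w)))) y) + (80 : ℝ) * (w y ^ 2 * deriv w y * (deriv (deriv w))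 y) + (20 : ℝ) * (w y ^ 3 * (deriv (deriv (deriv w))) y) + (120 : ℝ) * (w y ^ 3 * deriv w y ^ 2) + (30 : ℝ) * (w y ^ 4 * (deriv (deriv w)) y) + (-60 : ℝ) * (w y ^ 5 * deriv w y) + ((1 : ℝ)/2) * t₁ + t₁ * (deriv (deriv (deriv (deriv w)))) y + (-2 : ℝ) * t₁ * (w y * (deriv (deriv (deriv w))) y) + (-12 : ℝ) * t₁ * (w y * deriv w y ^ 2) + (-6 : ℝ) * t₁ * (w y ^ 2 * (deriv (deriv w)) y) + (12 : ℝ) * t₁ * (w y ^ 3 * deriv w y) + (-1 : ℝ) * (y * (deriv (deriv w)) y) + (2 : ℝ) * (y * w y * deriv w y)) y := by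
      refine Hc.congr_deriv ?_
      push_cast [Pi.pow_apply, Pi.mul_apply]
      ring
    exact H.deriv
  have H0 : (fun x : ℝ => (1 : ℝ) * (deriv (deriv (deriv (deriv w)))) x + (-10 : ℝ) * (w x * deriv w x ^ 2) + (-10 : ℝ) * (w x ^ 2 * (deriv (deriv w)) x) + (6 : ℝ) * w x ^ 5 + t₁ * (deriv (deriv w)) x + (-2 : ℝ) * t₁ * w x ^ 3) = (fun x : ℝ => α + (1 : ℝ) * (x * w x)) := by
    funext y
    have h := hP y
    rw [congrFun hf1 y, congrFun hf0 y] at h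
    linear_combination h
  have hL0 : deriv (fun x : ℝ => (1 : ℝ) * (deriv (deriv (deriv (deriv w)))) x + (-10 : ℝ) * (w x * deriv w x ^ 2) + (-10 : ℝ) * (w x ^ 2 * (deriv (deriv w)) x) + (6 : ℝ) * w x ^ 5 + t₁ * (deriv (deriv w)) x + (-2 : ℝ) * t₁ * w x ^ 3) = fun x : ℝ => (1 : ℝ) * (deriv (deriv (deriv (deriv (deriv w))))) x + (-10 : ℝ) * deriv w x ^ 3 + (-40 : ℝ) * (w x * deriv w x * (deriv (deriv w)) x) + (-10 : ℝ) * (w x ^ 2 * (deriv (deriv (deriv w))) x) + (30 : ℝ) * (w x ^ 4 * deriv w x) + t₁ * (deriv (deriv (deriv w))) x + (-6 : ℝ) * t₁ * (w x ^ 2 * deriv w x) := by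
    funext y
    have Hc := (((((((hD4 y).const_mul ((1 : ℝ))).add (((hD0 y).mul ((hD1 y).pow 2)).const_mul ((-10 : ℝ)))).add ((((hD0 y).pow 2).mul (hD2 y)).const_mul ((-10 : ℝ)))).add (((hD0 y).pow 5).const_mul ((6 : ℝ)))).add ((hD2 y).const_mul (t₁))).add (((hD0 y).pow 3).const_mul ((-2 : ℝ) * t₁)))
    have H : HasDerivAt (fun x : ℝ => (1 : ℝ) * (deriv (deriv (deriv (deriv w)))) x + (-10 : ℝ) * (w x * deriv w x ^ 2) + (-10 : ℝ) * (w x ^ 2 * (deriv (deriv w)) x) + (6 : ℝ) * w x ^ 5 + t₁ * (deriv (deriv w)) x + (-2 : ℝ) * t₁ * w x ^ 3) ((1 : ℝ) * (deriv (deriv (deriv (deriv (deriv w))))) y + (-10 : ℝ) * deriv w y ^ 3 + (-40 : ℝ) * (w y * deriv w y * (deriv (deriv w)) y) + (-10 : ℝ) * (w y ^ 2 * (deriv (deriv (deriv w))) y) + (30 : ℝ) * (w y ^ 4 * deriv w y) + t₁ * (deriv (deriv (deriv w))) y + (-6 : ℝ) * t₁ * (w y ^ 2 * deriv w y)) y :=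 by
      refine Hc.congr_deriv ?_
      push_cast [Pi.pow_apply]
      ring
    exact H.deriv
  have hR0 : deriv (fun x : ℝ => α + (1 : ℝ) * (x * w x)) = fun x : ℝ => (1 : ℝ) * w x + (1 : ℝ) * (x * deriv w x) := by
    funext y
    have Hc := ((hasDerivAt_const y (α)).add (((hid y).mul (hD0 y)).const_mul ((1 : ℝ))))
    have H : HasDerivAt (fun x : ℝ => α + (1 : ℝ) * (x * w x)) ((1 : ℝ) * w y + (1 : ℝ) * (y * deriv w y)) y := by
      refine Hc.congr_deriv ?_
      push_cast
      ring
    exact H.deriv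
  have H1 : (fun x : ℝ => (1 : ℝ) * (deriv (deriv (deriv (deriv (deriv w))))) x + (-10 : ℝ) * deriv w x ^ 3 + (-40 : ℝ) * (w x * deriv w x * (deriv (deriv w)) x) + (-10 : ℝ) * (w x ^ 2 * (deriv (deriv (deriv w))) x) + (30 : ℝ) * (w x ^ 4 * deriv w x) + t₁ * (deriv (deriv (deriv w))) x + (-6 : ℝ) * t₁ * (w x ^ 2 * deriv w x)) = (fun x : ℝ => (1 : ℝ) * w x + (1 : ℝ) * (x * deriv w x)) := by
    have h := congrArg deriv H0
    rw [hL0, hR0] at h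
    exact h
  have hL1 : deriv (fun x : ℝ => (1 : ℝ) * (deriv (deriv (deriv (deriv (deriv w))))) x + (-10 : ℝ) * deriv w x ^ 3 + (-40 : ℝ) * (w x * deriv w x * (deriv (deriv w)) x) + (-10 : ℝ) * (w x ^ 2 * (deriv (deriv (deriv w))) x) + (30 : ℝ) * (w x ^ 4 * deriv w x) + t₁ * (deriv (deriv (deriv w))) x + (-6 : ℝ) * t₁ * (w x ^ 2 * deriv w x)) = fun x : ℝ => (1 : ℝ) * (deriv (deriv (deriv (deriv (deriv (deriv w)))))) x + (-70 : ℝ) * (deriv w x ^ 2 * (deriv (deriv w)) x) + (-40 : ℝ) * (w x * (deriv (deriv w)) x ^ 2) + (-60 : ℝ) * (w x * deriv w x * (deriv (deriv (deriv w))) x) + (-10 : ℝ) * (w x ^ 2 * (deriv (deriv (deriv (deriv w)))) x) + (120 : ℝ) * (w x ^ 3 * deriv w x ^ 2) + (30 : ℝ) * (w x ^ 4 * (deriv (deriv w)) x) + t₁ * (deriv (deriv (deriv (deriv w)))) x + (-12 : ℝ) * t₁ * (w x * deriv w x ^ 2) + (-6 : ℝ) * t₁ * (w x ^ 2 * (deriv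 (deriv w)) x) := by
    funext y
    have Hc := ((((((((hD5 y).const_mul ((1 : ℝ))).add (((hD1 y).pow 3).const_mul ((-10 : ℝ)))).add ((((hD0 y).mul (hD1 y)).mul (hD2 y)).const_mul ((-40 : ℝ)))).add ((((hD0 y).pow 2).mul (hD3 y)).const_mul ((-10 : ℝ)))).add ((((hD0 y).pow 4).mul (hD1 y)).const_mul ((30 : ℝ)))).add ((hD3 y).const_mul (t₁))).add ((((hD0 y).pow 2).mul (hD1 y)).const_mul ((-6 : ℝ) * t₁)))
    have H : HasDerivAt (fun x : ℝ => (1 : ℝ) * (deriv (deriv (deriv (deriv (deriv w))))) x + (-10 : ℝ) * deriv w x ^ 3 + (-40 : ℝ) * (w x * deriv w x * (deriv (deriv w)) x) + (-10 : ℝ) * (w x ^ 2 * (deriv (deriv (deriv w))) x) + (30 : ℝ) * (w x ^ 4 * deriv w x) + t₁ * (deriv (deriv (deriv w))) x + (-6 : ℝ) * t₁ * (w x ^ 2 * deriv w x)) ((1 : ℝ) * (deriv (deriv (deriv (deriv (deriv (deriv w)))))) y + (-70 : ℝ) * (deriv w y ^ 2 * (deriv (deriv w)) y) + (-40 : ℝ)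 * (w y * (deriv (deriv w)) y ^ 2) + (-60 : ℝ) * (w y * deriv w y * (deriv (deriv (deriv w))) y) + (-10 : ℝ) * (w y ^ 2 * (deriv (deriv (deriv (deriv w)))) y) + (120 : ℝ) * (w y ^ 3 * deriv w y ^ 2) + (30 : ℝ) * (w y ^ 4 * (deriv (deriv w)) y) + t₁ * (deriv (deriv (deriv (deriv w)))) y + (-12 : ℝ) * t₁ * (w y * deriv w y ^ 2) + (-6 : ℝ) * t₁ * (w y ^ 2 * (deriv (deriv w)) y)) y := by
      refine Hc.congr_deriv ?_
      push_cast [Pi.pow_apply, Pi.mul_apply]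
      ring
    exact H.deriv
  have hR1 : deriv (fun x : ℝ => (1 : ℝ) * w x + (1 : ℝ) * (x * deriv w x)) = fun x : ℝ => (2 : ℝ) * deriv w x + (1 : ℝ) * (x * (deriv (deriv w)) x) := by
    funext y
    have Hc := (((hD0 y).const_mul ((1 : ℝ))).add (((hid y).mul (hD1 y)).const_mul ((1 : ℝ))))
    have H : HasDerivAt (fun x : ℝ => (1 : ℝ) * w x + (1 : ℝ) * (x * deriv w x)) ((2 : ℝ) * deriv w y + (1 : ℝ) * (y * (deriv (deriv w)) y)) y := by
      refine Hc.congr_deriv ?_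
      push_cast
      ring
    exact H.deriv
  have H2 : (fun x : ℝ => (1 : ℝ) * (deriv (deriv (deriv (deriv (deriv (deriv w)))))) x + (-70 : ℝ) * (deriv w x ^ 2 * (deriv (deriv w)) x) + (-40 : ℝ) * (w x * (deriv (deriv w)) x ^ 2) + (-60 : ℝ) * (w x * deriv w x * (deriv (deriv (deriv w))) x) + (-10 : ℝ) * (w x ^ 2 * (deriv (deriv (deriv (deriv w)))) x) + (120 : ℝ) * (w x ^ 3 * deriv w x ^ 2) + (30 : ℝ) * (w x ^ 4 * (deriv (deriv w)) x) + t₁ * (deriv (deriv (deriv (deriv w)))) x + (-12 : ℝ) * t₁ * (w x * deriv w x ^ 2) + (-6 : ℝ) * t₁ * (w x ^ 2 * (deriv (deriv w)) x)) = (fun x : ℝ => (2 : ℝ) * deriv w x + (1 : ℝ) * (x * (deriv (deriv w)) x)) := by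
    have h := congrArg deriv H1
    rw [hL1, hR1] at h
    exact h
  have E0 : ∀ y : ℝ, (1 : ℝ) * (deriv (deriv (deriv (deriv w)))) y + (-10 : ℝ) * (w y * deriv w y ^ 2) + (-10 : ℝ) * (w y ^ 2 * (deriv (deriv w)) y) + (6 : ℝ) * w y ^ 5 + t₁ * (deriv (deriv w)) y + (-2 : ℝ) * t₁ * w y ^ 3 = α + (1 : ℝ) * (y * w y) := fun y => congrFun H0 y
  have E1 : ∀ y : ℝ, (1 : ℝ) * (deriv (deriv (deriv (deriv (deriv w))))) y + (-10 : ℝ) * deriv w y ^ 3 + (-40 : ℝ) * (w y * deriv w y * (deriv (deriv w)) y) + (-10 : ℝ) * (w y ^ 2 * (deriv (deriv (deriv w))) y) + (30 : ℝ) * (w y ^ 4 * deriv w y) + t₁ * (deriv (deriv (deriv w))) y + (-6 : ℝ) * t₁ * (w y ^ 2 * deriv w y) = (1 : ℝ) * w y + (1 : ℝ) * (y * deriv w y) := fun y => congrFun H1 y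
  have E2 : ∀ y : ℝ, (1 : ℝ) * (deriv (deriv (deriv (deriv (deriv (deriv w)))))) y + (-70 : ℝ) * (deriv w y ^ 2 * (deriv (deriv w)) y) + (-40 : ℝ) * (w y * (deriv (deriv w)) y ^ 2) + (-60 : ℝ) * (w y * deriv w y * (deriv (deriv (deriv w))) y) + (-10 : ℝ) * (w y ^ 2 * (deriv (deriv (deriv (deriv w)))) y) + (120 : ℝ) * (w y ^ 3 * deriv w y ^ 2) + (30 : ℝ) * (w y ^ 4 * (deriv (deriv w)) y) + t₁ * (deriv (deriv (deriv (deriv w)))) y + (-12 : ℝ) * t₁ * (w y * deriv w y ^ 2) + (-6 : ℝ) * t₁ * (w y ^ 2 * (deriv (deriv w)) y) = (2 : ℝ) * deriv w y + (1 : ℝ) * (y * (deriv (deriv w)) y) := fun y => congrFun H2 y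
  have A : ∀ y : ℝ, d1 y = u y + t₁ / 2 := by
    intro y
    rw [hd1, congrFun hs1 y, hu y]
    linear_combination ((-2 : ℝ) * w y) * E1 y + ((1 : ℝ)) * E2 y
  have hd2f : d2 = deriv u := by
    funext y
    rw [hd2, show d1 = (fun x => u x + t₁ / 2) from funext A]
    exact deriv_add_const _
  have hd3f : d3 = deriv (deriv u) := by rw [hd3, hd2f]
  have hd4f : d4 = deriv (deriv (deriv u)) := by rw [hd4, hd3f]
  intro z
  rw [A z, congrFun hd2f z, congrFun hu1 z, congrFun hd3f z, congrFun hu2 z, congrFun hd4f z, congrFun hu3 z, congrFun hs0 z, hu z]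
  linear_combination ((-1 : ℝ) + (1 : ℝ) * (deriv (deriv (deriv (deriv w)))) z + (-10 : ℝ) * (w z * deriv w z ^ 2) + (-10 : ℝ) * (w z ^ 2 * (deriv (deriv w)) z) + (6 : ℝ) * w z ^ 5 + α + t₁ * (deriv (deriv w)) z + (-2 : ℝ) * t₁ * w z ^ 3 + (-1 : ℝ) * (z * w z)) * E0 z + ((-2 : ℝ) * (deriv (deriv (deriv w))) z + (-2 : ℝ) * deriv w z ^ 2 + (4 : ℝ) * (w z * (deriv (deriv w)) z) + (12 : ℝ) * (w z ^ 2 * deriv w z) + (-6 : ℝ) * w z ^ 4 + (-2 : ℝ) * t₁ * deriv w z + (2 : ℝ) * t₁ * w z ^ 2 + (1 : ℝ) * z) * E1 z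
end
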